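/- arXiv:1802.05935 — 5 statements merged into one kernel-verified Lean document; each statement's English description precedes it below -/
import Mathlib

section
/- If s,h ⊨ Σ for a list-free spatial formula Σ, then s ⊨ Cell(Σ,t) if and only if s(t) ∈ Dom(h). -/
abbrev Store : Type := ℕ → ℕ
abbrev Term : Type := Store → ℕ
abbrev PureF : Type := Store → Prop
abbrev Heap : Type := ℕ → Option (ℕ × ℕ)

def Heap.emp : Heap := fun _ => none

def Heap.Disj (h₁ h₂ : Heap) : Prop := ∀ n, h₁ n = none ∨ h₂ n = none

def Heap.union (h₁ h₂ : Heap) : Heap := fun n => (h₁ n).orElse (fun _ => h₂ n)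

def Heap.single (n : ℕ) (v : ℕ × ℕ) : Heap := fun m => if m = n then some v else none

def Heap.Dom (h : Heap) : Set ℕ := {n | h n ≠ none}

def LsK : ℕ → ℕ → ℕ → Heap → Prop
  | 0, _, _, _ => False
  | k+1, t, u, h => (t = u ∧ h = Heap.emp) ∨
      ∃ a b h₁, Heap.Disj (Heap.single t (a, b)) h₁ ∧
        h = Heap.union (Heap.single t (a, b)) h₁ ∧ LsK k a u h₁

def LsSem (t u : ℕ) (h : Heap) : Prop := ∃ k, LsK k t u h

def DllK : ℕ → ℕ → ℕ → ℕ → ℕ → Heap → Prop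
  | 0, _, _, _, _, _ => False
  | k+1, t, u, v, w, h => (t = u ∧ v = w ∧ h = Heap.emp) ∨
      ∃ a h₁, Heap.Disj (Heap.single t (a, w)) h₁ ∧
        h = Heap.union (Heap.single t (a, w)) h₁ ∧ DllK k a u v t h₁

def DllSem (t u v w : ℕ) (h : Heap) : Prop := ∃ k, DllK k t u v w h

inductive Atom : Type where
  | pto (t u v : Term)
  | arr (t u : Term)
  | ls (t u : Term)
  | dll (t u v w : Term)

def Atom.Sat (s : Store) (h : Heap) : Atom → Prop
  | .pto t u v => h = Heap.single (t s) (u s, v s)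
  | .arr t u => t s ≤ u s ∧ Heap.Dom h = Set.Icc (t s) (u s)
  | .ls t u => LsSem (t s) (u s) h
  | .dll t u v w => DllSem (t s) (u s) (v s) (w s) h

def SatSp (s : Store) : List Atom → Heap → Prop
  | [], h => h = Heap.emp
  | σ :: rest, h => ∃ h₁ h₂, Heap.Disj h₁ h₂ ∧ h = Heap.union h₁ h₂ ∧
      σ.Sat s h₁ ∧ SatSp s rest h₂

structure SH : Type where
  pure : PureF
  sp : List Atom

def SH.Sat (s : Store) (h : Heap) (φ : SH) : Prop := φ.pure s ∧ SatSp s φ.sp h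

def Valid (φ : SH) (Ψ : Set SH) : Prop := ∀ s h, φ.Sat s h → ∃ ψ ∈ Ψ, ψ.Sat s h

def Atom.terms : Atom → List Term
  | .pto t u v => [t, u, v]
  | .arr t u => [t, u]
  | .ls t u => [t, u]
  | .dll t u v w => [t, u, v, w]

def Atom.IsList : Atom → Prop
  | .ls _ _ => True
  | .dll _ _ _ _ => True
  | _ => False

def ListFree (l : List Atom) : Prop := ∀ σ ∈ l, ¬ σ.IsList

def Cell : List Atom → Term → Store → Prop
  | [], _, _ => False
  | .pto t' _ _ :: rest, t, s => t s = t' s ∨ Cell rest t s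
  | .arr t' u' :: rest, t, s => (t' s ≤ t s ∧ t s ≤ u' s) ∨ Cell rest t s
  | _ :: rest, t, s => Cell rest t s

def FreshT (x : ℕ) (t : Term) : Prop := ∀ s a, t (Function.update s x a) = t s

def FreshP (x : ℕ) (P : PureF) : Prop := ∀ s a, P (Function.update s x a) ↔ P s

def FreshA (x : ℕ) (σ : Atom) : Prop := ∀ t ∈ σ.terms, FreshT x t

def FreshSH (x : ℕ) (φ : SH) : Prop := FreshP x φ.pure ∧ ∀ σ ∈ φ.sp, FreshA x σ

def tvar (x : ℕ) : Term := fun s => s x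

def headLt (n : ℕ) : List Atom → Store → Prop
  | [], _ => True
  | .pto t _ _ :: _, s => n < t s
  | .arr t _ :: _, s => n < t s
  | .ls t _ :: _, s => n < t s
  | .dll t _ _ _ :: _, s => n < t s

def Sorted' : List Atom → Store → Prop
  | [], _ => True
  | .pto t _ _ :: rest, s => headLt (t s) rest s ∧ Sorted' rest s
  | .arr t u :: rest, s => t s ≤ u s ∧ headLt (u s) rest s ∧ Sorted' rest s
  | .ls _ _ :: rest, s => Sorted' rest s
  | .dll _ _ _ _ :: rest, s => Sorted' rest s

def SortedF (l : List Atom) (s : Store) : Prop := headLt 0 l s ∧ Sorted' l s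

def updL : Store → List ℕ → List ℕ → Store
  | s, [], _ => s
  | s, _ :: _, [] => s
  | s, x :: xs, a :: as => updL (Function.update s x a) xs as

structure ESH : Type where
  ex : List ℕ
  pure : PureF
  sp : List Atom

def ESH.Sat (s : Store) (h : Heap) (φ : ESH) : Prop :=
  ∃ as : List ℕ, as.length = φ.ex.length ∧
    φ.pure (updL s φ.ex as) ∧ SatSp (updL s φ.ex as) φ.sp h

def ESH.tilde (φ : ESH) : ESH :=
  ⟨φ.ex, fun s => φ.pure s ∧ SortedF φ.sp s, φ.sp⟩

def EValid (φ : ESH) (Ψ : Set ESH) : Prop := ∀ s h, ESH.Sat s h φ → ∃ ψ ∈ Ψ, ESH.Sat s h ψ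

lemma dom_union (h₁ h₂ : Heap) :
    Heap.Dom (Heap.union h₁ h₂) = Heap.Dom h₁ ∪ Heap.Dom h₂ := by
  ext n
  simp [Heap.Dom, Heap.union, Option.orElse]
  cases h₁ n <;> simp

theorem stmt5 (s : Store) (h : Heap) (l : List Atom) (t : Term)
    (hlf : ListFree l) (hsat : SatSp s l h) :
    Cell l t s ↔ t s ∈ Heap.Dom h := by
  induction l generalizing h with
  | nil =>
    simp [SatSp] at hsat
    subst hsat
    simp [Cell, Heap.Dom, Heap.emp]
  | cons a rest ih =>
    obtain ⟨h₁, h₂, hd, rfl, ha, hr⟩ := hsat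
    have hlf' : ListFree rest := fun σ hm => hlf σ (List.mem_cons_of_mem _ hm)
    have hrest : Cell rest t s ↔ t s ∈ Heap.Dom h₂ := by
      have := ih h₂ hlf' hr
      exact this
    rw [dom_union]
    cases a with
    | pto t' u v =>
      subst ha
      simp only [Cell, Set.mem_union, hrest]
      constructor
      · rintro (he | he)
        · left; simp [Heap.Dom, Heap.single, he]
        · right; exact he
      · rintro (he | he)
        · left
          simp [Heap.Dom, Heap.single] at he
          exact he
        · right; exact he
    | arr t' u' =>
      obtain ⟨hle, hdom⟩ := ha
      simp only [Cell, Set.mem_union, hrest, hdom, Set.mem_Icc]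
    | ls t' u' => exact absurd trivial (hlf _ List.mem_cons_self)
    | dll t' u' v' w' => exact absurd trivial (hlf _ List.mem_cons_self)
end

section
/- If s,h ⊨ σ for a spatial atom σ (a points-to, array, ls, or dll atom), some cell of h has first component a, i.e., (a,b) ∈ Ran(h) for some b, and a is neither in Dom(h) nor equal to s(t) for any term t occurring in σ, then σ must be an array atom Arr(-,-). -/
lemma lsK_head {k t u : ℕ} {h : Heap} (hk : LsK k t u h) :
    t ∈ Heap.Dom h ∨ t = u := by
  cases k with
  | zero => exact absurd hk (by simp [LsK])
  | succ k =>
    rcases hk with ⟨he, _⟩ | ⟨a, b, h₁, _, rfl, _⟩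
    · exact Or.inr he
    · left; simp [Heap.Dom, Heap.union, Heap.single, Option.orElse]

lemma lsK_ran {k t u : ℕ} {h : Heap} (hk : LsK k t u h) {d a b : ℕ}
    (hd : h d = some (a, b)) : a ∈ Heap.Dom h ∨ a = u := by
  induction k generalizing t h with
  | zero => exact absurd hk (by simp [LsK])
  | succ k ih =>
    rcases hk with ⟨_, rfl⟩ | ⟨a', b', h₁, hdisj, rfl, hk'⟩
    · simp [Heap.emp] at hd
    · have hsub : Heap.Dom h₁ ⊆ Heap.Dom (Heap.union (Heap.single t (a', b')) h₁) := by
        intro x hx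
        simp only [Heap.Dom, Set.mem_setOf_eq, Heap.union, Option.orElse] at *
        cases hxx : Heap.single t (a', b') x <;> simp [hxx]; exact hx
      by_cases hdt : d = t
      · subst hdt
        obtain ⟨rfl, rfl⟩ : a' = a ∧ b' = b := by
          simpa [Heap.union, Heap.single, Option.orElse] using hd
        rcases lsK_head hk' with hx | hx
        · exact Or.inl (hsub hx)
        · exact Or.inr hx
      · have hd₁ : h₁ d = some (a, b) := by
          simpa [Heap.union, Heap.single, hdt, Option.orElse] using hd
        rcases ih hk' hd₁ with hx | hx
        · exact Or.inl (hsub hx)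
        · exact Or.inr hx

lemma dllK_head {k t u v w : ℕ} {h : Heap} (hk : DllK k t u v w h) :
    t ∈ Heap.Dom h ∨ t = u := by
  cases k with
  | zero => exact absurd hk (by simp [DllK])
  | succ k =>
    rcases hk with ⟨he, _, _⟩ | ⟨a, h₁, _, rfl, _⟩
    · exact Or.inr he
    · left; simp [Heap.Dom, Heap.union, Heap.single, Option.orElse]

lemma dllK_ran {k t u v w : ℕ} {h : Heap} (hk : DllK k t u v w h) {d a b : ℕ}
    (hd : h d = some (a, b)) : a ∈ Heap.Dom h ∨ a = u := by
  induction k generalizing t w h with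
  | zero => exact absurd hk (by simp [DllK])
  | succ k ih =>
    rcases hk with ⟨_, _, rfl⟩ | ⟨a', h₁, hdisj, rfl, hk'⟩
    · simp [Heap.emp] at hd
    · have hsub : Heap.Dom h₁ ⊆ Heap.Dom (Heap.union (Heap.single t (a', w)) h₁) := by
        intro x hx
        simp only [Heap.Dom, Set.mem_setOf_eq, Heap.union, Option.orElse] at *
        cases hxx : Heap.single t (a', w) x <;> simp [hxx]; exact hx
      by_cases hdt : d = t
      · subst hdt
        obtain ⟨rfl, rfl⟩ : a' = a ∧ w = b := by
          simpa [Heap.union, Heap.single, Option.orElse] using hd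
        rcases dllK_head hk' with hx | hx
        · exact Or.inl (hsub hx)
        · exact Or.inr hx
      · have hd₁ : h₁ d = some (a, b) := by
          simpa [Heap.union, Heap.single, hdt, Option.orElse] using hd
        rcases ih hk' hd₁ with hx | hx
        · exact Or.inl (hsub hx)
        · exact Or.inr hx

theorem stmt6 (s : Store) (h : Heap) (σ : Atom) (a : ℕ)
    (hsat : σ.Sat s h)
    (hran : ∃ d b, h d = some (a, b))
    (hdom : a ∉ Heap.Dom h)
    (htm : ∀ t ∈ σ.terms, a ≠ t s) :
    ∃ t u, σ = Atom.arr t u := by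
  obtain ⟨d, b, hd⟩ := hran
  cases σ with
  | pto t u v =>
    exfalso
    rw [hsat] at hd
    simp only [Heap.single] at hd
    split at hd
    · have : a = u s := by simpa using congrArg (Option.map Prod.fst) hd.symm
      exact htm u (by simp [Atom.terms]) this
    · exact nomatch hd
  | arr t u => exact ⟨t, u, rfl⟩
  | ls t u =>
    exfalso
    obtain ⟨k, hk⟩ := hsat
    rcases lsK_ran hk hd with hx | hx
    · exact hdom hx
    · exact htm u (by simp [Atom.terms]) hx
  | dll t u v w =>
    exfalso
    obtain ⟨k, hk⟩ := hsat
    rcases dllK_ran hk hd with hx | hx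
    · exact hdom hx
    · exact htm u (by simp [Atom.terms]) hx
end

section
/- Suppose s,h ⊨ Σ for a spatial formula Σ, h(d) = (a,b) for some d, a ∉ Dom(h) ∪ {s(t) | t ∈ Tm(Σ)}, and h' agrees with h on Dom(h) ∖ {d} with Dom(h') = Dom(h). Then s,h' ⊨ Σ. -/
lemma union_eq_left {h₁ h₂ : Heap} {n : ℕ} {p : ℕ × ℕ} (hn : h₁ n = some p) :
    Heap.union h₁ h₂ n = some p := by
  simp [Heap.union, hn]

lemma union_eq_right {h₁ h₂ : Heap} {n : ℕ} (hn : h₁ n = none) :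
    Heap.union h₁ h₂ n = h₂ n := by
  simp [Heap.union, hn]

lemma union_none {h₁ h₂ : Heap} {n : ℕ} (hc : Heap.union h₁ h₂ n = none) :
    h₁ n = none ∧ h₂ n = none := by
  rcases hx : h₁ n with _ | p
  · exact ⟨rfl, by rwa [union_eq_right hx] at hc⟩
  · rw [union_eq_left hx] at hc; cases hc

lemma single_same (t : ℕ) (p : ℕ × ℕ) : Heap.single t p t = some p := by
  simp [Heap.single]

lemma single_ne {t m : ℕ} (p : ℕ × ℕ) (hm : m ≠ t) : Heap.single t p m = none := by
  simp [Heap.single, hm]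

lemma ls_head : ∀ k t u (h : Heap), LsK k t u h → t = u ∨ h t ≠ none := by
  intro k t u h hk
  cases k with
  | zero => exact absurd hk (by simp [LsK])
  | succ k =>
    rcases hk with ⟨he, _⟩ | ⟨a, b, h₁, _, hun, _⟩
    · exact Or.inl he
    · right; rw [hun, union_eq_left (single_same t (a, b))]; simp

lemma ls_next : ∀ k t u (h : Heap) d a b, LsK k t u h → h d = some (a, b) →
    a = u ∨ h a ≠ none := by
  intro k
  induction k with
  | zero => intro t u h d a b hk; exact absurd hk (by simp [LsK])
  | succ k ih =>
    intro t u h d a b hk hd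
    rcases hk with ⟨_, he⟩ | ⟨a₀, b₀, h₁, _, hun, hk'⟩
    · rw [he] at hd; exact absurd hd (by simp [Heap.emp])
    · by_cases hdt : d = t
      · subst hdt
        rw [hun, union_eq_left (single_same d (a₀, b₀))] at hd
        rw [Option.some_inj, Prod.mk.injEq] at hd
        rcases ls_head k a₀ u h₁ hk' with h1 | h1
        · exact Or.inl (hd.1 ▸ h1)
        · right; intro hc
          rw [← hd.1] at hc
          exact h1 (union_none (hun ▸ hc)).2
      · rw [hun, union_eq_right (single_ne _ hdt)] at hd
        rcases ih a₀ u h₁ d a b hk' hd with h1 | h1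
        · exact Or.inl h1
        · right; intro hc; exact h1 (union_none (hun ▸ hc)).2

lemma dll_head : ∀ k t u v w (h : Heap), DllK k t u v w h → t = u ∨ h t ≠ none := by
  intro k t u v w h hk
  cases k with
  | zero => exact absurd hk (by simp [DllK])
  | succ k =>
    rcases hk with ⟨he, _⟩ | ⟨a, h₁, _, hun, _⟩
    · exact Or.inl he
    · right; rw [hun, union_eq_left (single_same t (a, w))]; simp

lemma dll_next : ∀ k t u v w (h : Heap) d a b, DllK k t u v w h → h d = some (a, b) →
    a = u ∨ h a ≠ none := by
  intro k
  induction k with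
  | zero => intro t u v w h d a b hk; exact absurd hk (by simp [DllK])
  | succ k ih =>
    intro t u v w h d a b hk hd
    rcases hk with ⟨_, _, he⟩ | ⟨a₀, h₁, _, hun, hk'⟩
    · rw [he] at hd; exact absurd hd (by simp [Heap.emp])
    · by_cases hdt : d = t
      · subst hdt
        rw [hun, union_eq_left (single_same d (a₀, w))] at hd
        rw [Option.some_inj, Prod.mk.injEq] at hd
        rcases dll_head k a₀ u v d h₁ hk' with h1 | h1
        · exact Or.inl (hd.1 ▸ h1)
        · right; intro hc
          rw [← hd.1] at hc
          exact h1 (union_none (hun ▸ hc)).2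
      · rw [hun, union_eq_right (single_ne _ hdt)] at hd
        rcases ih a₀ u v t h₁ d a b hk' hd with h1 | h1
        · exact Or.inl h1
        · right; intro hc; exact h1 (union_none (hun ▸ hc)).2

lemma dom_update (h h' : Heap) (d : ℕ) (hd : h d ≠ none) (hd' : h' d ≠ none) :
    Heap.Dom (fun n => if n = d then h' n else h n) = Heap.Dom h := by
  ext n
  by_cases hn : n = d
  · subst hn; simp only [Heap.Dom, Set.mem_setOf_eq, if_pos rfl]
    exact ⟨fun _ => hd, fun _ => hd'⟩
  · simp only [Heap.Dom, Set.mem_setOf_eq, if_neg hn]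

lemma atom_pres (s : Store) (h₁ h₁' : Heap) (σ : Atom) (d a b : ℕ)
    (hsat : σ.Sat s h₁) (hd : h₁ d = some (a, b))
    (ha : a ∉ Heap.Dom h₁)
    (ha' : ∀ t ∈ σ.terms, a ≠ t s)
    (hdom : Heap.Dom h₁' = Heap.Dom h₁) :
    σ.Sat s h₁' := by
  cases σ with
  | pto t u v =>
    exfalso
    rw [Atom.Sat] at hsat
    rw [hsat] at hd
    by_cases hdt : d = t s
    · subst hdt; rw [single_same] at hd
      rw [Option.some_inj, Prod.mk.injEq] at hd
      exact ha' u (by simp [Atom.terms]) hd.1.symm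
    · rw [single_ne _ hdt] at hd; simp at hd
  | arr t u =>
    rw [Atom.Sat] at hsat ⊢
    exact ⟨hsat.1, by rw [hdom, hsat.2]⟩
  | ls t u =>
    exfalso
    obtain ⟨k, hk⟩ := hsat
    rcases ls_next k (t s) (u s) h₁ d a b hk hd with h1 | h1
    · exact ha' u (by simp [Atom.terms]) h1
    · exact ha h1
  | dll t u v w =>
    exfalso
    obtain ⟨k, hk⟩ := hsat
    rcases dll_next k (t s) (u s) (v s) (w s) h₁ d a b hk hd with h1 | h1
    · exact ha' u (by simp [Atom.terms]) h1
    · exact ha h1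

theorem stmt7 (s : Store) (h h' : Heap) (l : List Atom) (d a b : ℕ)
    (hsat : SatSp s l h) (hd : h d = some (a, b))
    (ha : a ∉ Heap.Dom h)
    (ha' : ∀ σ ∈ l, ∀ t ∈ Atom.terms σ, a ≠ t s)
    (hdom : Heap.Dom h' = Heap.Dom h)
    (hagree : ∀ x, x ≠ d → h' x = h x) :
    SatSp s l h' := by
  induction l generalizing h h' with
  | nil =>
    rw [SatSp] at hsat; rw [hsat] at hd; exact absurd hd (by simp [Heap.emp])
  | cons σ rest ih =>
    obtain ⟨h₁, h₂, hdisj, hun, hσ, hrest⟩ := hsat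
    have hd' : h' d ≠ none := by
      have : d ∈ Heap.Dom h' := by rw [hdom]; simp [Heap.Dom, hd]
      exact this
    rcases hp : h₁ d with _ | p
    · -- d is in h₂
      have hd₂ : h₂ d = some (a, b) := by
        rw [hun, union_eq_right hp] at hd; exact hd
      have ha₂ : a ∉ Heap.Dom h₂ := by
        intro hc; apply ha; rw [hun]
        intro hcc; exact hc (union_none hcc).2
      refine ⟨h₁, fun n => if n = d then h' n else h₂ n, ?_, ?_, hσ, ?_⟩
      · intro n
        by_cases hn : n = d
        · subst hn; simp only [if_pos rfl]; exact Or.inl hp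
        · simp only [if_neg hn]; exact hdisj n
      · funext n
        by_cases hn : n = d
        · subst hn
          rcases hq : h' n with _ | q
          · exact absurd hq hd'
          · rw [Heap.union, hp]; simp [hq]
        · rw [hagree n hn, hun]
          simp only [Heap.union, if_neg hn]
      · refine ih h₂ _ hrest hd₂ ha₂
          (fun σ' hσ' => ha' σ' (List.mem_cons_of_mem _ hσ')) ?_ ?_
        · exact dom_update h₂ h' d (by simp [hd₂]) hd'
        · intro x hx; simp only [if_neg hx]
    · -- d is in h₁
      have hd₁ : h₁ d = some (a, b) := by
        rw [hun, union_eq_left hp] at hd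
        rw [hp, hd]
      have ha₁ : a ∉ Heap.Dom h₁ := by
        intro hc; apply ha; rw [hun]
        intro hcc; exact hc (union_none hcc).1
      refine ⟨fun n => if n = d then h' n else h₁ n, h₂, ?_, ?_, ?_, hrest⟩
      · intro n
        by_cases hn : n = d
        · subst hn
          rcases hdisj n with h1 | h1
          · rw [h1] at hp; cases hp
          · exact Or.inr h1
        · simp only [if_neg hn]; exact hdisj n
      · funext n
        by_cases hn : n = d
        · subst hn
          rcases hq : h' n with _ | q
          · exact absurd hq hd'
          · have h2d : h₂ n = none := by
              rcases hdisj n with h1 | h1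
              · rw [h1] at hp; cases hp
              · exact h1
            rw [Heap.union]; simp [hq]
        · rw [hagree n hn, hun]
          simp only [Heap.union, if_neg hn]
      · exact atom_pres s h₁ _ σ d a b hσ hd₁ ha₁
          (ha' σ List.mem_cons_self)
          (dom_update h₁ h' d (by simp [hd₁]) hd')
end

section
/- If s,h ⊨ ls^n(t,u) and n is the least such index, then the length of the list equals n−1; in particular Dom(h) has exactly n−1 elements. -/
lemma dom_union_single (t : ℕ) (v : ℕ × ℕ) (h₁ : Heap) :
    Heap.Dom (Heap.union (Heap.single t v) h₁) = insert t (Heap.Dom h₁) := by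
  ext n
  simp only [Heap.Dom, Heap.union, Heap.single, Set.mem_setOf_eq, Set.mem_insert_iff]
  by_cases hn : n = t <;> simp [hn, Option.orElse]

lemma notMem_dom (t : ℕ) (v : ℕ × ℕ) (h₁ : Heap)
    (hd : Heap.Disj (Heap.single t v) h₁) : t ∉ Heap.Dom h₁ := by
  rcases hd t with h | h
  · simp [Heap.single] at h
  · simp [Heap.Dom, h]

lemma lsK_dom_finite (u : ℕ) : ∀ n t h, LsK n t u h → (Heap.Dom h).Finite := by
  intro n
  induction n with
  | zero => intro _ _ hs; exact absurd hs (by simp [LsK])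
  | succ k ih =>
    intro t h hs
    rcases hs with ⟨_, rfl⟩ | ⟨a, b, h₁, hd, rfl, hk⟩
    · simp [Heap.Dom, Heap.emp]
    · rw [dom_union_single]
      exact (ih a h₁ hk).insert t

theorem stmt10 (n t u : ℕ) (h : Heap)
    (hsat : LsK n t u h) (hmin : ∀ k, LsK k t u h → n ≤ k) :
    (Heap.Dom h).ncard = n - 1 := by
  induction n generalizing t h with
  | zero => exact absurd hsat (by simp [LsK])
  | succ k ih =>
    rcases hsat with ⟨rfl, rfl⟩ | ⟨a, b, h₁, hd, rfl, hk⟩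
    · have h1 : LsK 1 t t Heap.emp := Or.inl ⟨rfl, rfl⟩
      have := hmin 1 (by simpa using h1)
      have hk0 : k = 0 := by omega
      subst hk0
      simp [Heap.Dom, Heap.emp]
    · have hkpos : 1 ≤ k := by
        rcases k with _ | k
        · exact absurd hk (by simp [LsK])
        · omega
      have hmin' : ∀ j, LsK j a u h₁ → k ≤ j := by
        intro j hj
        have := hmin (j + 1) (Or.inr ⟨a, b, h₁, hd, rfl, hj⟩)
        omega
      have hIH := ih a h₁ hk hmin'
      rw [dom_union_single]
      rw [Set.ncard_insert_of_notMem (notMem_dom t (a, b) h₁ hd)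
        (lsK_dom_finite u k a h₁ hk)]
      omega
end

section
/- (Local soundness and completeness of the rule (↦Ls)) If Π_φ entails t = t', then the entailment t ↦ (v,w) * φ ⊢ ls(t',u') * ψ, ψ⃗ is valid if and only if the entailment t ↦ (v,w) * φ ⊢ (t' = u' ∧ ψ), (t' ↦ (v,w) * ls(v,u') * ψ), ψ⃗ is valid. -/
lemma Heap.union_assoc (a b c : Heap) :
    Heap.union (Heap.union a b) c = Heap.union a (Heap.union b c) := by
  funext n
  cases ha : a n <;> simp [Heap.union, Option.orElse, ha]

lemma Heap.emp_union (h : Heap) : Heap.union Heap.emp h = h := by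
  funext n; simp [Heap.union, Heap.emp, Option.orElse]

lemma Heap.disj_emp_left (h : Heap) : Heap.Disj Heap.emp h := fun _ => Or.inl rfl

lemma Heap.union_apply_left {a b : Heap} {n : ℕ} {x : ℕ × ℕ} (h : a n = some x) :
    Heap.union a b n = some x := by simp [Heap.union, h]

lemma Heap.disj_union_right {a b c : Heap} (hab : Heap.Disj a b) (hac : Heap.Disj a c) :
    Heap.Disj a (Heap.union b c) := by
  intro n
  rcases hab n with h | h
  · exact Or.inl h
  · rcases hac n with h' | h'
    · exact Or.inl h'
    · right; simp [Heap.union, h, h', Option.orElse]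

lemma Heap.disj_of_union_left {a b c : Heap} (h : Heap.Disj (Heap.union a b) c) :
    Heap.Disj a c := by
  intro n
  rcases h n with h' | h'
  · cases hv : a n with
    | none => exact Or.inl rfl
    | some x => rw [Heap.union_apply_left hv] at h'; exact absurd h' (by simp)
  · exact Or.inr h'

lemma Heap.disj_of_union_right {a b c : Heap} (h : Heap.Disj (Heap.union a b) c) :
    Heap.Disj b c := by
  intro n
  rcases h n with h' | h'
  · left
    cases hv : b n with
    | none => rfl
    | some x =>
      cases ha : a n with
      | none => simp [Heap.union, ha, hv, Option.orElse] at h'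
      | some y => rw [Heap.union_apply_left ha] at h'; exact absurd h' (by simp)
  · exact Or.inr h'

lemma Heap.disj_symm {a b : Heap} (h : Heap.Disj a b) : Heap.Disj b a :=
  fun n => (h n).symm

/-- local soundness and completeness of (↦Ls) -/
theorem stmt14 (P : PureF) (sp : List Atom) (t v w t' u' : Term) (ψ : SH) (Ψ : Set SH)
    (hent : ∀ s, P s → t s = t' s) :
    Valid ⟨P, .pto t v w :: sp⟩ (insert ⟨ψ.pure, .ls t' u' :: ψ.sp⟩ Ψ) ↔
      Valid ⟨P, .pto t v w :: sp⟩
        (insert ⟨fun s => t' s = u' s ∧ ψ.pure s, ψ.sp⟩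
          (insert ⟨ψ.pure, .pto t' v w :: .ls v u' :: ψ.sp⟩ Ψ)) := by
  constructor
  · intro H s h hsat
    obtain ⟨χ, hχmem, hχsat⟩ := H s h hsat
    rcases Set.mem_insert_iff.mp hχmem with rfl | hm
    · -- ls case
      obtain ⟨hψp, h₁, h₂, hd12, heq12, hls, hψsp⟩ := hχsat
      obtain ⟨k, hk⟩ := hls
      cases k with
      | zero => exact absurd hk id
      | succ k' =>
        rcases hk with ⟨ht'u', h₁emp⟩ | ⟨a, b, h₁', hdsgl, h₁eq, hk'⟩
        · refine ⟨⟨fun s => t' s = u' s ∧ ψ.pure s, ψ.sp⟩, Set.mem_insert _ _,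
            ⟨⟨ht'u', hψp⟩, ?_⟩⟩
          rw [heq12, h₁emp, Heap.emp_union]; exact hψsp
        · -- identify (a,b) = (v s, w s)
          obtain ⟨hP, hA, hB, hdAB, heqAB, hptoA, hspB⟩ := hsat
          have htt' : t s = t' s := hent s hP
          have hval1 : h (t s) = some (v s, w s) := by
            rw [heqAB]
            exact Heap.union_apply_left (by rw [hptoA]; simp [Heap.single])
          have hval2 : h (t' s) = some (a, b) := by
            rw [heq12]
            exact Heap.union_apply_left
              (by rw [h₁eq]; exact Heap.union_apply_left (by simp [Heap.single]))
          rw [htt', hval2] at hval1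
          obtain ⟨ha, hb⟩ : a = v s ∧ b = w s := by
            have := hval1.symm; simp at this; exact ⟨this.1.symm, this.2.symm⟩
          subst ha; subst hb
          have hd1 : Heap.Disj (Heap.single (t' s) (v s, w s)) h₂ :=
            Heap.disj_of_union_left (h₁eq ▸ hd12)
          have hd2 : Heap.Disj h₁' h₂ := Heap.disj_of_union_right (h₁eq ▸ hd12)
          refine ⟨⟨ψ.pure, .pto t' v w :: .ls v u' :: ψ.sp⟩,
            Set.mem_insert_iff.mpr (Or.inr (Set.mem_insert _ _)),
            ⟨hψp, Heap.single (t' s) (v s, w s), Heap.union h₁' h₂,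
              Heap.disj_union_right hdsgl hd1, ?_, rfl,
              h₁', h₂, hd2, rfl, ⟨k', hk'⟩, hψsp⟩⟩
          rw [heq12, h₁eq, Heap.union_assoc]
    · exact ⟨χ, Set.mem_insert_iff.mpr
        (Or.inr (Set.mem_insert_iff.mpr (Or.inr hm))), hχsat⟩
  · intro H s h hsat
    obtain ⟨χ, hχmem, hχsat⟩ := H s h hsat
    rcases Set.mem_insert_iff.mp hχmem with rfl | hm
    · obtain ⟨⟨ht'u', hψp⟩, hψsp⟩ := hχsat
      exact ⟨⟨ψ.pure, .ls t' u' :: ψ.sp⟩, Set.mem_insert _ _,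
        ⟨hψp, Heap.emp, h, Heap.disj_emp_left h, (Heap.emp_union h).symm,
          ⟨1, Or.inl ⟨ht'u', rfl⟩⟩, hψsp⟩⟩
    rcases Set.mem_insert_iff.mp hm with rfl | hm'
    · obtain ⟨hψp, hA, hB, hdAB, heqAB, hAeq, hL, hR, hdLR, hBeq, hlsL, hψR⟩ := hχsat
      obtain ⟨k, hk⟩ := hlsL
      have hdAB' : Heap.Disj hA (Heap.union hL hR) := hBeq ▸ hdAB
      have hdAL : Heap.Disj hA hL :=
        Heap.disj_symm (Heap.disj_of_union_left (Heap.disj_symm hdAB'))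
      have hdAR : Heap.Disj hA hR :=
        Heap.disj_symm (Heap.disj_of_union_right (Heap.disj_symm hdAB'))
      refine ⟨⟨ψ.pure, .ls t' u' :: ψ.sp⟩, Set.mem_insert _ _,
        ⟨hψp, Heap.union hA hL, hR,
          Heap.disj_symm (Heap.disj_union_right (Heap.disj_symm hdAR)
            (Heap.disj_symm hdLR)), ?_,
          ⟨k + 1, Or.inr ⟨v s, w s, hL, hAeq ▸ hdAL, by rw [hAeq], hk⟩⟩, hψR⟩⟩
      rw [heqAB, hBeq, Heap.union_assoc]
    · exact ⟨χ, Set.mem_insert_iff.mpr (Or.inr hm'), hχsat⟩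
end
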